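/- On M = {e, ∞} ∪ S ordered by ⪯ (with e the bottom element, ∞ the top element, and q_a ⪯ q_b on S iff t_bg(a) ≥ t_bg(b), (c_do(a), t_do(a)) ≤_lex (c_do(b), t_do(b)), and (c_dt(a), t_dt(a)) ≤_lex (c_dt(b), t_dt(b))), the element q_a ∧ q_b defined by t_bg = max(t_bg(a), t_bg(b)) and lexicographic minima of the (c, t)-pairs is the greatest lower bound of q_a and q_b; i.e., (M, ⪯) is a meet-semilattice with meet ∧. -/
import Mathlib


structure Res where
  tbg : ℕ
  cdo : ℕ
  tdo : ℕ
  cdt : ℕ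
  tdt : ℕ

def Res.adm (q : Res) : Prop :=
  (q.tdo < q.tdt → q.cdo = q.cdt) ∧
  (q.tdt < q.tdo → q.cdo = q.cdt - 1) ∧
  (q.tdo = q.tdt → q.cdo = q.cdt ∨ q.cdo = q.cdt - 1)

inductive M where
  | e : M
  | inf : M
  | res : Res → M

def M.adm : M → Prop
  | M.e => True
  | M.inf => True
  | M.res a => a.adm

/-- Lexicographic order `≤_lex` on `ℕ²`. -/
def lexLe (p q : ℕ × ℕ) : Prop :=
  p.1 < q.1 ∨ (p.1 = q.1 ∧ p.2 ≤ q.2)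

instance (p q : ℕ × ℕ) : Decidable (lexLe p q) := by
  unfold lexLe; infer_instance

def Res.le (a b : Res) : Prop :=
  b.tbg ≤ a.tbg ∧ lexLe (a.cdo, a.tdo) (b.cdo, b.tdo) ∧
    lexLe (a.cdt, a.tdt) (b.cdt, b.tdt)

/-- The order `⪯` on `M`: `e` is bottom, `∞` is top. -/
def M.le : M → M → Prop
  | M.e, _ => True
  | _, M.inf => True
  | M.res a, M.res b => a.le b
  | _, _ => False

/-- Lexicographic minimum on `ℕ²`. -/
def lexMin (p q : ℕ × ℕ) : ℕ × ℕ :=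
  if lexLe p q then p else q

def Res.meet (a b : Res) : Res where
  tbg := max a.tbg b.tbg
  cdo := (lexMin (a.cdo, a.tdo) (b.cdo, b.tdo)).1
  tdo := (lexMin (a.cdo, a.tdo) (b.cdo, b.tdo)).2
  cdt := (lexMin (a.cdt, a.tdt) (b.cdt, b.tdt)).1
  tdt := (lexMin (a.cdt, a.tdt) (b.cdt, b.tdt)).2

/-- The meet on `M = {e, ∞} ∪ S`. -/
def M.meet : M → M → M
  | M.e, _ => M.e
  | _, M.e => M.e
  | M.inf, q => q
  | q, M.inf => q
  | M.res a, M.res b => M.res (a.meet b)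

lemma lexLe_refl (p : ℕ × ℕ) : lexLe p p := by unfold lexLe; omega

lemma lexLe_total' {p q : ℕ × ℕ} (h : ¬ lexLe p q) : lexLe q p := by
  unfold lexLe at *; omega

lemma lexMin_le_left (p q : ℕ × ℕ) : lexLe (lexMin p q) p := by
  unfold lexMin; split
  · exact lexLe_refl p
  · exact lexLe_total' ‹_›

lemma lexMin_le_right (p q : ℕ × ℕ) : lexLe (lexMin p q) q := by
  unfold lexMin; split
  · assumption
  · exact lexLe_refl q

lemma le_lexMin {x p q : ℕ × ℕ} (hp : lexLe x p) (hq : lexLe x q) :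
    lexLe x (lexMin p q) := by
  unfold lexMin; split <;> assumption

lemma lexLe_refl_res (r : Res) : (M.res r).le (M.res r) := by
  exact ⟨le_refl _, lexLe_refl _, lexLe_refl _⟩

lemma res_meet_le_left (a b : Res) : (a.meet b).le a :=
  ⟨le_max_left _ _, lexMin_le_left _ _, lexMin_le_left _ _⟩

lemma res_meet_le_right (a b : Res) : (a.meet b).le b :=
  ⟨le_max_right _ _, lexMin_le_right _ _, lexMin_le_right _ _⟩

lemma res_le_meet {x a b : Res} (hxa : x.le a) (hxb : x.le b) :
    x.le (a.meet b) := by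
  obtain ⟨h1, h2, h3⟩ := hxa
  obtain ⟨h4, h5, h6⟩ := hxb
  exact ⟨max_le h1 h4, le_lexMin h2 h5, le_lexMin h3 h6⟩

/-- `q_a ∧ q_b` is the greatest lower bound of `q_a` and `q_b`
for `⪯`; i.e. `(M, ⪯)` is a meet-semilattice with meet `∧`. -/
theorem M_meet_is_glb (a b : M) (ha : a.adm) (hb : b.adm) :
    (a.meet b).le a ∧ (a.meet b).le b ∧
      ∀ x : M, x.adm → x.le a → x.le b → x.le (a.meet b) := by
  refine ⟨?_, ?_, ?_⟩
  · cases a with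
    | e => cases b <;> trivial
    | inf => cases b <;> trivial
    | res ra => cases b with
      | e => trivial
      | inf => exact lexLe_refl_res ra
      | res rb => exact res_meet_le_left ra rb
  · cases a with
    | e => cases b <;> trivial
    | inf => cases b with
      | e => trivial
      | inf => trivial
      | res rb => exact lexLe_refl_res rb
    | res ra => cases b with
      | e => trivial
      | inf => trivial
      | res rb => exact res_meet_le_right ra rb
  · intro x _ hxa hxb
    cases x with
    | e => cases a <;> cases b <;> trivial
    | inf => cases a <;> cases b <;> first | trivial | exact hxa | exact hxb
    | res rx =>
      cases a with
      | e => exact absurd hxa (by simp [M.le])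
      | inf => cases b with
        | e => exact absurd hxb (by simp [M.le])
        | inf => trivial
        | res rb => exact hxb
      | res ra => cases b with
        | e => exact absurd hxb (by simp [M.le])
        | inf => exact hxa
        | res rb => exact res_le_meet hxa hxb
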